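/- Assume in addition that f(x) → +∞ as x → +∞. Let (S, I) be a traveling wave profile with speed c > 0 such that 0 < S(ξ) < S₀ and I(ξ) > 0 for all ξ ∈ ℝ. If limsup_{ξ→+∞} I(ξ) = +∞, then lim_{ξ→+∞} I(ξ) = +∞. -/

import Mathlib

/-!
If `I` does not tend to `+∞`, it drops below some level `B` infinitely often while exceeding
every bound infinitely often, so it makes excursions above `B`: intervals `[x, y]` with
`I x = I y = B` and `I ≥ B` in between. Adding the two equations cancels the infection terms, and
integrating over `[x, y]` shows that the total population `S + I` loses at least
`(μ₂ B - Λ)(y - x)`. Its actual change and the integrated lattice diffusion are bounded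
independently of the excursion: for `S` by `S < S₀`, for `I` by the Gronwall estimate
`I s ≤ exp (k (t - s)) I t` for `s ≤ t` (from `c I' ≥ -(2 d₂ + μ₂) I`) together with
`d₂ I (y + 1) ≤ (2 d₂ + μ₂) B`, which follows from `I' (y) ≤ 0`. Hence once `μ₂ B > Λ`,
excursions have uniformly bounded length, and the Gronwall estimate bounds `I` on all of them,
contradicting `limsup I = +∞`.
-/

open Real Filter Set intervalIntegral Topology

theorem nonneg_of_deriv_pos {f : ℝ → ℝ} (hf0 : f 0 = 0) (hf' : ∀ x, 0 ≤ x → 0 < deriv f x)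
    {x : ℝ} (hx : 0 ≤ x) : 0 ≤ f x := by
  have hdiff : ∀ z ∈ Ici (0 : ℝ), DifferentiableAt ℝ f z := fun z hz =>
    differentiableAt_of_deriv_ne_zero (hf' z hz).ne'
  have hmono : MonotoneOn f (Ici 0) :=
    monotoneOn_of_deriv_nonneg (convex_Ici 0)
      (fun z hz => (hdiff z hz).continuousAt.continuousWithinAt)
      (fun z hz => (hdiff z (interior_subset hz)).differentiableWithinAt)
      (fun z hz => (hf' z (interior_subset hz)).le)
  simpa [hf0] using hmono self_mem_Ici hx hx

theorem le_exp_mul_of_neg_mul_le_deriv {u : ℝ → ℝ} {k : ℝ} (hu : Differentiable ℝ u)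
    (hu' : ∀ t, -(k * u t) ≤ deriv u t) {x y : ℝ} (hxy : x ≤ y) :
    u x ≤ exp (k * (y - x)) * u y := by
  have hmono : Monotone fun t => u t * exp (k * t) := by
    refine monotone_of_deriv_nonneg (by fun_prop) fun t => ?_
    have hlin : HasDerivAt (fun t => k * t) k t := by
      simpa using (hasDerivAt_id t).const_mul k
    have hderiv : HasDerivAt (fun t => u t * exp (k * t))
        (deriv u t * exp (k * t) + u t * (exp (k * t) * k)) t :=
      (hu t).hasDerivAt.mul hlin.exp
    rw [hderiv.deriv, mul_comm (exp _) k, ← mul_assoc, ← add_mul]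
    exact mul_nonneg (by linarith [hu' t]) (exp_pos _).le
  have h := hmono hxy
  rw [mul_sub, exp_sub, div_mul_eq_mul_div, le_div_iff₀ (exp_pos _)]
  linarith

theorem integral_le_exp_mul_of_neg_mul_le_deriv {u : ℝ → ℝ} {k : ℝ} (hu : Differentiable ℝ u)
    (hu' : ∀ t, -(k * u t) ≤ deriv u t) (hk : 0 ≤ k) {a : ℝ} (ha : 0 ≤ u (a + 1)) :
    ∫ t in a..a + 1, u t ≤ exp k * u (a + 1) := by
  have hbound : ∀ t ∈ Icc a (a + 1), u t ≤ exp k * u (a + 1) := fun t ht =>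
    (le_exp_mul_of_neg_mul_le_deriv hu hu' ht.2).trans <|
      mul_le_mul_of_nonneg_right (exp_le_exp.mpr (by nlinarith [ht.1])) ha
  calc ∫ t in a..a + 1, u t ≤ ∫ _ in a..a + 1, exp k * u (a + 1) :=
        integral_mono_on (by linarith) (hu.continuous.intervalIntegrable _ _)
          intervalIntegrable_const hbound
    _ = exp k * u (a + 1) := by simp

theorem integral_shift_add_shift_sub_two_mul {u : ℝ → ℝ} (hu : Continuous u) (x y : ℝ) :
    ∫ t in x..y, (u (t + 1) + u (t - 1) - 2 * u t) =
      (∫ t in y..y + 1, u t) + (∫ t in x - 1..x, u t)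
        - ((∫ t in x..x + 1, u t) + ∫ t in y - 1..y, u t) := by
  have hi : ∀ a b, IntervalIntegrable u MeasureTheory.volume a b := hu.intervalIntegrable
  rw [integral_sub (by apply Continuous.intervalIntegrable; fun_prop)
      (by apply Continuous.intervalIntegrable; fun_prop),
    integral_add (by apply Continuous.intervalIntegrable; fun_prop)
      (by apply Continuous.intervalIntegrable; fun_prop),
    integral_const_mul, integral_comp_add_right u 1, integral_comp_sub_right u 1]
  have h₁ := integral_interval_sub_interval_comm (hi (x + 1) (y + 1)) (hi x y) (hi (x + 1) x)
  have h₂ := integral_interval_sub_interval_comm (hi (x - 1) (y - 1)) (hi x y) (hi (x - 1) x)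
  rw [integral_symm x (x + 1), integral_symm y (y + 1)] at h₁
  linarith

theorem integral_shift_add_shift_sub_two_mul_le {u : ℝ → ℝ} (hu : Continuous u)
    (hu0 : ∀ t, 0 ≤ u t) (x y : ℝ) :
    ∫ t in x..y, (u (t + 1) + u (t - 1) - 2 * u t) ≤
      (∫ t in y..y + 1, u t) + ∫ t in x - 1..x, u t := by
  rw [integral_shift_add_shift_sub_two_mul hu]
  have h₁ : 0 ≤ ∫ t in x..x + 1, u t := integral_nonneg (by linarith) fun t _ => hu0 t
  have h₂ : 0 ≤ ∫ t in y - 1..y, u t := integral_nonneg (by linarith) fun t _ => hu0 t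
  linarith

theorem deriv_nonpos_of_forall_Ioo_le {u : ℝ → ℝ} {x y : ℝ} (hxy : x < y)
    (hu : ∀ t ∈ Ioo x y, u y ≤ u t) : deriv u y ≤ 0 := by
  by_cases hd : DifferentiableAt ℝ u y
  · have hslope : Tendsto (slope u y) (𝓝[<] y) (𝓝 (deriv u y)) :=
      hd.hasDerivAt.tendsto_slope.mono_left (nhdsWithin_mono _ fun t ht => ne_of_lt ht)
    refine le_of_tendsto hslope ?_
    filter_upwards [Ioo_mem_nhdsLT hxy] with t ht
    rw [slope_def_field]
    exact div_nonpos_of_nonneg_of_nonpos (sub_nonneg.mpr (hu t ht)) (sub_nonpos.mpr ht.2.le)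
  · rw [deriv_zero_of_not_differentiableAt hd]

theorem exists_first_eq_of_lt {u : ℝ → ℝ} (hu : Continuous u) {p b B : ℝ} (hpb : p ≤ b)
    (hp : B < u p) (hb : u b ≤ B) : ∃ y ∈ Ioc p b, u y = B ∧ ∀ t ∈ Icc p y, B ≤ u t := by
  set s := Icc p b ∩ {t | u t ≤ B}
  have hs : IsCompact s := isCompact_Icc.inter_right (isClosed_le hu continuous_const)
  obtain ⟨⟨hpy, hyb⟩, hyB⟩ : sInf s ∈ s := hs.sInf_mem ⟨b, ⟨hpb, le_rfl⟩, hb⟩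
  have hbefore : ∀ t ∈ Ico p (sInf s), B < u t := fun t ht => not_le.mp fun htB =>
    ht.2.not_ge (csInf_le hs.bddBelow ⟨⟨ht.1, ht.2.le.trans hyb⟩, htB⟩)
  have hyB' : u (sInf s) = B := by
    refine le_antisymm hyB (not_lt.mp fun hlt => ?_)
    -- otherwise the intermediate value theorem gives a point of `s` below `sInf s`
    obtain ⟨t, ht, htB⟩ := intermediate_value_Icc' hpy hu.continuousOn ⟨hlt.le, hp.le⟩
    exact (hbefore t ⟨ht.1, lt_of_le_of_ne ht.2 fun h => hlt.ne (h ▸ htB)⟩).ne' htB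
  refine ⟨sInf s, ⟨lt_of_le_of_ne hpy fun h => (h ▸ hyB).not_gt hp, hyb⟩, hyB', fun t ht => ?_⟩
  rcases ht.2.lt_or_eq with hty | rfl
  exacts [(hbefore t ⟨ht.1, hty⟩).le, hyB'.ge]

theorem exists_excursion_above {u : ℝ → ℝ} (hu : Continuous u) {a p b B : ℝ} (hap : a ≤ p)
    (hpb : p ≤ b) (ha : u a ≤ B) (hp : B < u p) (hb : u b ≤ B) :
    ∃ x y, x < p ∧ p ≤ y ∧ u x = B ∧ u y = B ∧ ∀ t ∈ Icc x y, B ≤ u t := by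
  obtain ⟨y, ⟨hpy, -⟩, hyB, hy⟩ := exists_first_eq_of_lt hu hpb hp hb
  obtain ⟨x', ⟨hpx, -⟩, hxB, hx⟩ := exists_first_eq_of_lt (u := fun t => u (-t))
    (by fun_prop) (neg_le_neg hap) (by simpa using hp) (by simpa using ha)
  refine ⟨-x', y, by linarith, hpy.le, hxB, hyB, fun t ht => ?_⟩
  rcases le_total p t with hpt | htp
  · exact hy t ⟨hpt, ht.2⟩
  · simpa using hx (-t) ⟨neg_le_neg htp, by linarith [ht.1]⟩

theorem exists_excursion_above_of_frequently {u : ℝ → ℝ} (hu : Continuous u) {B M : ℝ}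
    (hBM : B ≤ M) (hB : ∃ᶠ t in atTop, u t ≤ B) (hM : ∃ᶠ t in atTop, M < u t) :
    ∃ x p y, x < p ∧ p ≤ y ∧ M < u p ∧ u x = B ∧ u y = B ∧ ∀ t ∈ Icc x y, B ≤ u t := by
  obtain ⟨a, -, ha⟩ := frequently_atTop.mp hB 0
  obtain ⟨p, hap, hp⟩ := frequently_atTop.mp hM a
  obtain ⟨b, hpb, hb⟩ := frequently_atTop.mp hB p
  obtain ⟨x, y, hxp, hpy, hx, hy, hxy⟩ := exists_excursion_above hu hap hpb ha (hBM.trans_lt hp) hb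
  exact ⟨x, p, y, hxp, hpy, hp, hx, hy, hxy⟩

section TravelingWave

variable {d₁ d₂ Λ μ₁ μ₂ c S₀ : ℝ} {S I g : ℝ → ℝ}

theorem neg_mul_le_deriv_of_lattice_eq (hc : 0 < c) (hd₂ : 0 ≤ d₂) (hIpos : ∀ t, 0 < I t)
    (hg : ∀ t, 0 ≤ g t)
    (hIeq : ∀ t, c * deriv I t = d₂ * (I (t + 1) + I (t - 1) - 2 * I t) + g t - μ₂ * I t)
    (t : ℝ) : -((2 * d₂ + μ₂) / c * I t) ≤ deriv I t := by
  have h : -((2 * d₂ + μ₂) * I t) ≤ c * deriv I t := by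
    rw [hIeq t]
    nlinarith [hIpos (t + 1), hIpos (t - 1), hg t]
  rw [div_mul_eq_mul_div, ← neg_div, div_le_iff₀ hc]
  linarith

theorem mul_shift_le_of_deriv_nonpos (hc : 0 < c) (hd₂ : 0 ≤ d₂) (hIpos : ∀ t, 0 < I t)
    (hg : ∀ t, 0 ≤ g t)
    (hIeq : ∀ t, c * deriv I t = d₂ * (I (t + 1) + I (t - 1) - 2 * I t) + g t - μ₂ * I t)
    {y : ℝ} (hy : deriv I y ≤ 0) : d₂ * I (y + 1) ≤ (2 * d₂ + μ₂) * I y := by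
  have := hIeq y
  nlinarith [hIpos (y - 1), hg y]

theorem total_population_increment_le (hμ₁ : 0 ≤ μ₁) (hμ₂ : 0 ≤ μ₂) (hS : ContDiff ℝ 1 S)
    (hI : ContDiff ℝ 1 I) (hS0 : ∀ t, 0 ≤ S t)
    (hSeq : ∀ t, c * deriv S t = d₁ * (S (t + 1) + S (t - 1) - 2 * S t) + Λ - μ₁ * S t - g t)
    (hIeq : ∀ t, c * deriv I t = d₂ * (I (t + 1) + I (t - 1) - 2 * I t) + g t - μ₂ * I t)
    {x y B : ℝ} (hxy : x ≤ y) (hB : ∀ t ∈ Icc x y, B ≤ I t) :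
    c * (S y - S x + (I y - I x)) ≤
      d₁ * (∫ t in x..y, (S (t + 1) + S (t - 1) - 2 * S t))
        + d₂ * (∫ t in x..y, (I (t + 1) + I (t - 1) - 2 * I t)) + (Λ - μ₂ * B) * (y - x) := by
  have hSc : Continuous S := hS.continuous
  have hIc : Continuous I := hI.continuous
  have hS' : Continuous (deriv S) := hS.continuous_deriv le_rfl
  have hI' : Continuous (deriv I) := hI.continuous_deriv le_rfl
  have hftc : ∫ t in x..y, (c * deriv S t + c * deriv I t) = c * (S y - S x + (I y - I x)) := by
    rw [integral_add ((hS'.intervalIntegrable _ _).const_mul c)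
        ((hI'.intervalIntegrable _ _).const_mul c), integral_const_mul, integral_const_mul,
      integral_deriv_eq_sub (fun t _ => hS.differentiable one_ne_zero t)
        (hS'.intervalIntegrable _ _),
      integral_deriv_eq_sub (fun t _ => hI.differentiable one_ne_zero t)
        (hI'.intervalIntegrable _ _)]
    ring
  rw [← hftc]
  calc _ = ∫ t in x..y, (d₁ * (S (t + 1) + S (t - 1) - 2 * S t)
          + d₂ * (I (t + 1) + I (t - 1) - 2 * I t) + Λ - μ₁ * S t - μ₂ * I t) :=
        integral_congr fun t _ => by linear_combination hSeq t + hIeq t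
    _ ≤ ∫ t in x..y, (d₁ * (S (t + 1) + S (t - 1) - 2 * S t)
          + d₂ * (I (t + 1) + I (t - 1) - 2 * I t) + (Λ - μ₂ * B)) := by
        refine integral_mono_on hxy (by apply Continuous.intervalIntegrable; fun_prop)
          (by apply Continuous.intervalIntegrable; fun_prop) fun t ht => ?_
        nlinarith [hS0 t, hB t ht]
    _ = _ := by
        rw [integral_add (by apply Continuous.intervalIntegrable; fun_prop)
            intervalIntegrable_const,
          integral_add (by apply Continuous.intervalIntegrable; fun_prop)
            (by apply Continuous.intervalIntegrable; fun_prop),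
          integral_const_mul, integral_const_mul, integral_const, smul_eq_mul]
        ring

theorem excursion_length_le {k : ℝ} (hd₁ : 0 ≤ d₁) (hd₂ : 0 ≤ d₂) (hμ₁ : 0 ≤ μ₁)
    (hμ₂ : 0 ≤ μ₂) (hc : 0 ≤ c) (hk : 0 ≤ k) (hS : ContDiff ℝ 1 S) (hI : ContDiff ℝ 1 I)
    (hSbd : ∀ t, 0 < S t ∧ S t < S₀) (hIpos : ∀ t, 0 < I t)
    (hgronwall : ∀ t, -(k * I t) ≤ deriv I t)
    (hSeq : ∀ t, c * deriv S t = d₁ * (S (t + 1) + S (t - 1) - 2 * S t) + Λ - μ₁ * S t - g t)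
    (hIeq : ∀ t, c * deriv I t = d₂ * (I (t + 1) + I (t - 1) - 2 * I t) + g t - μ₂ * I t)
    {x y B : ℝ} (hxy : x ≤ y) (hIx : I x = B) (hB : ∀ t ∈ Icc x y, B ≤ I t)
    (hIy : d₂ * I (y + 1) ≤ (2 * d₂ + μ₂) * B) :
    (μ₂ * B - Λ) * (y - x) ≤ (c + 2 * d₁) * S₀ + exp k * (3 * d₂ + μ₂) * B := by
  have htotal :=
    total_population_increment_le hμ₁ hμ₂ hS hI (fun t => (hSbd t).1.le) hSeq hIeq hxy hB
  have hSunit : ∀ a, ∫ t in a..a + 1, S t ≤ S₀ := fun a =>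
    (integral_mono_on (by linarith) (hS.continuous.intervalIntegrable _ _)
      intervalIntegrable_const fun t _ => (hSbd t).2.le).trans_eq (by simp)
  have hΔS : ∫ t in x..y, (S (t + 1) + S (t - 1) - 2 * S t) ≤ 2 * S₀ := by
    have hleft := hSunit (x - 1)
    rw [sub_add_cancel] at hleft
    linarith [hSunit y,
      integral_shift_add_shift_sub_two_mul_le hS.continuous (fun t => (hSbd t).1.le) x y]
  have hΔI : ∫ t in x..y, (I (t + 1) + I (t - 1) - 2 * I t) ≤ exp k * I (y + 1) + exp k * B := by
    have hdiff := hI.differentiable one_ne_zero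
    have hleft := integral_le_exp_mul_of_neg_mul_le_deriv hdiff hgronwall hk (hIpos (x - 1 + 1)).le
    rw [sub_add_cancel, hIx] at hleft
    linarith [integral_le_exp_mul_of_neg_mul_le_deriv hdiff hgronwall hk (hIpos (y + 1)).le,
      integral_shift_add_shift_sub_two_mul_le hI.continuous (fun t => (hIpos t).le) x y]
  have hSxy : -S₀ ≤ S y - S x := by linarith [(hSbd x).2, (hSbd y).1]
  have hIxy : I x ≤ I y := hIx ▸ hB y ⟨hxy, le_rfl⟩
  have hE : 0 ≤ exp k := (exp_pos k).le
  nlinarith [mul_le_mul_of_nonneg_left hΔS hd₁, mul_le_mul_of_nonneg_left hΔI hd₂,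
    mul_le_mul_of_nonneg_left hIy hE, mul_le_mul_of_nonneg_left hSxy hc,
    mul_le_mul_of_nonneg_left (sub_nonneg.mpr hIxy) hc]

end TravelingWave

theorem I_tendsto_atTop_of_limsup_atTop_general
    (d₁ d₂ Λ β μ₁ μ₂ : ℝ) (hd₁ : 0 < d₁) (hd₂ : 0 < d₂) (hΛ : 0 < Λ)
    (hβ : 0 < β) (hμ₁ : 0 < μ₁) (hμ₂ : 0 < μ₂)
    (f : ℝ → ℝ) (hf0 : f 0 = 0)
    (hf' : ∀ I : ℝ, 0 ≤ I → 0 < deriv f I)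
    (c : ℝ) (hc : 0 < c)
    (S I : ℝ → ℝ) (hS : ContDiff ℝ 1 S) (hI : ContDiff ℝ 1 I)
    (hSeq : ∀ ξ : ℝ, c * deriv S ξ =
      d₁ * (S (ξ + 1) + S (ξ - 1) - 2 * S ξ) + Λ - μ₁ * S ξ - β * S ξ * f (I ξ))
    (hIeq : ∀ ξ : ℝ, c * deriv I ξ =
      d₂ * (I (ξ + 1) + I (ξ - 1) - 2 * I ξ) + β * S ξ * f (I ξ) - μ₂ * I ξ)
    (hSbd : ∀ ξ : ℝ, 0 < S ξ ∧ S ξ < Λ / μ₁) (hIpos : ∀ ξ : ℝ, 0 < I ξ)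
    (hlimsup : ∀ M : ℝ, ∃ᶠ ξ in atTop, M < I ξ) :
    Tendsto I atTop atTop := by
  have hincidence : ∀ t, 0 ≤ β * S t * f (I t) := fun t =>
    mul_nonneg (mul_nonneg hβ.le (hSbd t).1.le) (nonneg_of_deriv_pos hf0 hf' (hIpos t).le)
  set k := (2 * d₂ + μ₂) / c
  have hk : 0 ≤ k := by positivity
  have hgronwall := neg_mul_le_deriv_of_lattice_eq hc hd₂.le hIpos hincidence hIeq
  by_contra hnot
  obtain ⟨B₀, hB₀⟩ : ∃ B₀, ∃ᶠ t in atTop, I t < B₀ := by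
    simpa only [tendsto_atTop, not_forall, not_eventually, not_le] using hnot
  set B := max B₀ ((Λ + 1) / μ₂)
  have hμ₂B : Λ + 1 ≤ μ₂ * B := (div_le_iff₀' hμ₂).mp (le_max_right _ _)
  -- excursions above `B` have length at most `L`, so by Gronwall `I ≤ M` on them
  set L := (c + 2 * d₁) * (Λ / μ₁) + exp k * (3 * d₂ + μ₂) * B
  set M := exp (k * L) * B
  have hBM : B ≤ M := le_mul_of_one_le_left (by positivity) (one_le_exp (by positivity))
  obtain ⟨x, p, y, hxp, hpy, hp, hIx, hIy, hBI⟩ :=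
    exists_excursion_above_of_frequently hI.continuous hBM
      (hB₀.mono fun t h => h.le.trans (le_max_left _ _)) (hlimsup M)
  have hxy : x ≤ y := (hxp.trans_le hpy).le
  have hderiv : deriv I y ≤ 0 := deriv_nonpos_of_forall_Ioo_le (hxp.trans_le hpy)
    fun t ht => hIy ▸ hBI t (Ioo_subset_Icc_self ht)
  have hlen : y - x ≤ L := by
    have hIy1 := mul_shift_le_of_deriv_nonpos hc hd₂.le hIpos hincidence hIeq hderiv
    rw [hIy] at hIy1
    have := excursion_length_le hd₁.le hd₂.le hμ₁.le hμ₂.le hc.le hk hS hI hSbd hIpos hgronwall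
      hSeq hIeq hxy hIx hBI hIy1
    nlinarith
  have : I p ≤ M := calc
    I p ≤ exp (k * (y - p)) * I y :=
      le_exp_mul_of_neg_mul_le_deriv (hI.differentiable one_ne_zero) hgronwall hpy
    _ ≤ M := by
      rw [hIy]
      refine mul_le_mul_of_nonneg_right (exp_le_exp.mpr ?_) (by positivity)
      exact mul_le_mul_of_nonneg_left (by linarith) hk
  linarith

/-- **Dichotomy for the infected component at `+∞`** (Lemma 3.4).
Assume additionally `f(x) → +∞` as `x → +∞`.  Let `(S, I)` be a traveling wave
profile with speed `c > 0` satisfying `0 < S < S₀` and `I > 0`.  If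
`limsup_{ξ→+∞} I(ξ) = +∞`, then `lim_{ξ→+∞} I(ξ) = +∞`. -/
theorem I_tendsto_atTop_of_limsup_atTop
    (d₁ d₂ Λ β μ₁ μ₂ : ℝ) (hd₁ : 0 < d₁) (hd₂ : 0 < d₂) (hΛ : 0 < Λ)
    (hβ : 0 < β) (hμ₁ : 0 < μ₁) (hμ₂ : 0 < μ₂)
    (f : ℝ → ℝ) (hf0 : f 0 = 0) (hfC1 : ContDiff ℝ 1 f)
    (hf' : ∀ I : ℝ, 0 ≤ I → 0 < deriv f I)
    (hfratio : ∀ I J : ℝ, 0 < I → I ≤ J → f J / J ≤ f I / I)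
    (hfinf : Tendsto f atTop atTop)
    (c : ℝ) (hc : 0 < c)
    (S I : ℝ → ℝ) (hS : ContDiff ℝ 1 S) (hI : ContDiff ℝ 1 I)
    (hSeq : ∀ ξ : ℝ, c * deriv S ξ =
      d₁ * (S (ξ + 1) + S (ξ - 1) - 2 * S ξ) + Λ - μ₁ * S ξ - β * S ξ * f (I ξ))
    (hIeq : ∀ ξ : ℝ, c * deriv I ξ =
      d₂ * (I (ξ + 1) + I (ξ - 1) - 2 * I ξ) + β * S ξ * f (I ξ) - μ₂ * I ξ)
    (hSbd : ∀ ξ : ℝ, 0 < S ξ ∧ S ξ < Λ / μ₁) (hIpos : ∀ ξ : ℝ, 0 < I ξ)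
    (hlimsup : ∀ M : ℝ, ∃ᶠ ξ in atTop, M < I ξ) :
    Tendsto I atTop atTop :=
  I_tendsto_atTop_of_limsup_atTop_general d₁ d₂ Λ β μ₁ μ₂ hd₁ hd₂ hΛ hβ hμ₁ hμ₂ f hf0 hf' c hc S I
    hS hI hSeq hIeq hSbd hIpos hlimsup
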